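/- arXiv:2510.19721 — 5 statements merged into one kernel-verified Lean document; each statement's English description precedes it below -/
import Mathlib

section
/- A state U = (ρ, m, B, E) ∈ ℝ⁸ with ρ > 0 satisfies E − |m|²/(2ρ) − |B|²/2 > 0 if and only if for every v* ∈ ℝ³ and B* ∈ ℝ³ one has U · n* + |B*|²/2 > 0, where n* = (|v*|²/2, −v*, −B*, 1). -/
/-!
Completing the square in `v*` and in `B*` writes `U · n* + |B*|²/2` as
`E − |m|²/(2ρ) − |B|²/2 + |ρ v* − m|²/(2ρ) + |B* − B|²/2`.
The two squares are nonnegative and vanish exactly at `v* = m/ρ`, `B* = B`.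
-/

section CompletingTheSquare

variable {ι : Type*} [Fintype ι]

lemma mul_sum_sq_half_sub_sum_mul_eq {ρ : ℝ} (hρ : ρ ≠ 0) (m v : ι → ℝ) :
    ρ * ((∑ i, v i ^ 2) / 2) - ∑ i, m i * v i
      = (∑ i, (ρ * v i - m i) ^ 2) / (2 * ρ) - (∑ i, m i ^ 2) / (2 * ρ) := by
  have hTerm : ∀ i, (ρ * v i - m i) ^ 2 / (2 * ρ) - m i ^ 2 / (2 * ρ)
      = ρ * (v i ^ 2 / 2) - m i * v i := fun i ↦ by field_simp; ring
  simp only [Finset.sum_div, ← Finset.sum_sub_distrib, hTerm, Finset.mul_sum]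

lemma isLeast_mul_sum_sq_half_sub_sum_mul {ρ : ℝ} (hρ : 0 < ρ) (m : ι → ℝ) :
    IsLeast (Set.range fun v : ι → ℝ ↦ ρ * ((∑ i, v i ^ 2) / 2) - ∑ i, m i * v i)
      (-((∑ i, m i ^ 2) / (2 * ρ))) := by
  refine ⟨⟨fun i ↦ m i / ρ, ?_⟩, ?_⟩
  · simp [mul_sum_sq_half_sub_sum_mul_eq hρ.ne', mul_div_cancel₀ _ hρ.ne']
  · rintro _ ⟨v, rfl⟩
    dsimp only
    rw [mul_sum_sq_half_sub_sum_mul_eq hρ.ne']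
    have : 0 ≤ (∑ i, (ρ * v i - m i) ^ 2) / (2 * ρ) := by positivity
    linarith

end CompletingTheSquare

/-- Geometric quasi-linearization (GQL) equivalence for ideal MHD:
for a state `U = (ρ, m, B, E)` with `ρ > 0`, the internal-energy positivity
`E − |m|²/(2ρ) − |B|²/2 > 0` holds iff `U · n* + |B*|²/2 > 0` for all `v*, B* ∈ ℝ³`,
where `n* = (|v*|²/2, −v*, −B*, 1)`. -/
theorem gql_equivalence (ρ E : ℝ) (m B : Fin 3 → ℝ) (hρ : 0 < ρ) :
    (0 < E - (∑ i, m i ^ 2) / (2 * ρ) - (∑ i, B i ^ 2) / 2) ↔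
    (∀ vs Bs : Fin 3 → ℝ,
      0 < ρ * ((∑ i, vs i ^ 2) / 2) - (∑ i, m i * vs i) - (∑ i, B i * Bs i) + E
        + (∑ i, Bs i ^ 2) / 2) := by
  obtain ⟨⟨vMin, hvMin⟩, hKinetic⟩ := isLeast_mul_sum_sq_half_sub_sum_mul hρ m
  obtain ⟨⟨BMin, hBMin⟩, hMagnetic⟩ := isLeast_mul_sum_sq_half_sub_sum_mul one_pos B
  simp only [one_mul, mul_one] at hvMin hBMin hMagnetic
  have hSplit : ∀ vs Bs : Fin 3 → ℝ,
      ρ * ((∑ i, vs i ^ 2) / 2) - (∑ i, m i * vs i) - (∑ i, B i * Bs i) + E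
        + (∑ i, Bs i ^ 2) / 2
      = E + (ρ * ((∑ i, vs i ^ 2) / 2) - ∑ i, m i * vs i)
        + ((∑ i, Bs i ^ 2) / 2 - ∑ i, B i * Bs i) := fun _ _ ↦ by ring
  constructor
  · intro hE vs Bs
    have hv := hKinetic ⟨vs, rfl⟩
    have hB := hMagnetic ⟨Bs, rfl⟩
    simp only at hv hB
    rw [hSplit]
    linarith
  · intro h
    have := h vMin BMin
    rw [hSplit, hvMin, hBMin] at this
    linarith
end

section
/- The admissible set G of ideal MHD states is convex: if U₁ and U₂ both have positive density and positive internal energy E − |m|²/(2ρ) − |B|²/2 > 0, then so does any convex combination θU₁ + (1−θ)U₂ with θ ∈ [0,1]. -/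
/-!
The kinetic energy `|m|² / (2ρ)` is the perspective of a convex quadratic, hence jointly convex
in `(ρ, m)` on `ρ > 0`, and the magnetic energy `|B|² / 2` is convex. So the internal energy is
concave on `ρ > 0`, and its superlevel set `{𝓔 > 0}` there is convex.
-/

theorem weighted_sq_div_le {a b r s : ℝ} (ha : 0 ≤ a) (hb : 0 ≤ b) (hr : 0 < r) (hs : 0 < s)
    (x y : ℝ) : (a * x + b * y) ^ 2 / (a * r + b * s) ≤ a * (x ^ 2 / r) + b * (y ^ 2 / s) := by
  have hrhs : 0 ≤ a * (x ^ 2 / r) + b * (y ^ 2 / s) := by positivity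
  rcases (add_nonneg (mul_nonneg ha hr.le) (mul_nonneg hb hs.le)).eq_or_lt with hD | hD
  · rwa [← hD, div_zero]
  rw [mul_div_assoc', mul_div_assoc', div_add_div _ _ hr.ne' hs.ne',
    div_le_div_iff₀ hD (by positivity)]
  -- after clearing denominators the gap is `a * b * (x * s - y * r) ^ 2`
  nlinarith [mul_nonneg (mul_nonneg ha hb) (sq_nonneg (x * s - y * r))]

namespace MHD

variable {ι : Type*} [Fintype ι]

noncomputable def kineticEnergy (ρ : ℝ) (m : ι → ℝ) : ℝ := (∑ i, m i ^ 2) / (2 * ρ)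

noncomputable def magneticEnergy (B : ι → ℝ) : ℝ := (∑ i, B i ^ 2) / 2

noncomputable def internalEnergy (ρ E : ℝ) (m B : ι → ℝ) : ℝ :=
  E - kineticEnergy ρ m - magneticEnergy B

theorem kineticEnergy_smul_add_smul_le {a b ρ₁ ρ₂ : ℝ} (ha : 0 ≤ a) (hb : 0 ≤ b) (hρ₁ : 0 < ρ₁)
    (hρ₂ : 0 < ρ₂) (m₁ m₂ : ι → ℝ) :
    kineticEnergy (a * ρ₁ + b * ρ₂) (fun i ↦ a * m₁ i + b * m₂ i) ≤
      a * kineticEnergy ρ₁ m₁ + b * kineticEnergy ρ₂ m₂ := by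
  have hρ : 2 * (a * ρ₁ + b * ρ₂) = a * (2 * ρ₁) + b * (2 * ρ₂) := by ring
  simp only [kineticEnergy, hρ, Finset.sum_div, Finset.mul_sum, ← Finset.sum_add_distrib]
  exact Finset.sum_le_sum fun i _ ↦ weighted_sq_div_le ha hb (by positivity) (by positivity) _ _

theorem magneticEnergy_smul_add_smul_le {a b : ℝ} (ha : 0 ≤ a) (hb : 0 ≤ b) (hab : a + b = 1)
    (B₁ B₂ : ι → ℝ) :
    magneticEnergy (fun i ↦ a * B₁ i + b * B₂ i) ≤
      a * magneticEnergy B₁ + b * magneticEnergy B₂ := by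
  have hsq : ∀ i, (a * B₁ i + b * B₂ i) ^ 2 ≤ a * B₁ i ^ 2 + b * B₂ i ^ 2 := fun i ↦
    (even_two.convexOn_pow (𝕜 := ℝ)).2 (Set.mem_univ (B₁ i)) (Set.mem_univ (B₂ i)) ha hb hab
  calc magneticEnergy (fun i ↦ a * B₁ i + b * B₂ i)
      ≤ (∑ i, (a * B₁ i ^ 2 + b * B₂ i ^ 2)) / 2 := by
        unfold magneticEnergy
        gcongr with i
        exact hsq i
    _ = a * magneticEnergy B₁ + b * magneticEnergy B₂ := by
        rw [Finset.sum_add_distrib, ← Finset.mul_sum, ← Finset.mul_sum]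
        unfold magneticEnergy
        ring

theorem smul_add_smul_le_internalEnergy {a b ρ₁ ρ₂ : ℝ} (ha : 0 ≤ a) (hb : 0 ≤ b)
    (hab : a + b = 1) (hρ₁ : 0 < ρ₁) (hρ₂ : 0 < ρ₂) (E₁ E₂ : ℝ) (m₁ m₂ B₁ B₂ : ι → ℝ) :
    a * internalEnergy ρ₁ E₁ m₁ B₁ + b * internalEnergy ρ₂ E₂ m₂ B₂ ≤
      internalEnergy (a * ρ₁ + b * ρ₂) (a * E₁ + b * E₂) (fun i ↦ a * m₁ i + b * m₂ i)
        (fun i ↦ a * B₁ i + b * B₂ i) := by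
  have hkin := kineticEnergy_smul_add_smul_le ha hb hρ₁ hρ₂ m₁ m₂
  have hmag := magneticEnergy_smul_add_smul_le ha hb hab B₁ B₂
  simp only [internalEnergy]
  linarith

end MHD

open MHD in
/-- Convexity of the admissible set `G` of ideal MHD states. -/
theorem admissible_set_convex (θ : ℝ) (hθ0 : 0 ≤ θ) (hθ1 : θ ≤ 1)
    (ρ₁ E₁ ρ₂ E₂ : ℝ) (m₁ B₁ m₂ B₂ : Fin 3 → ℝ)
    (hρ₁ : 0 < ρ₁) (hE₁ : 0 < E₁ - (∑ i, m₁ i ^ 2) / (2 * ρ₁) - (∑ i, B₁ i ^ 2) / 2)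
    (hρ₂ : 0 < ρ₂) (hE₂ : 0 < E₂ - (∑ i, m₂ i ^ 2) / (2 * ρ₂) - (∑ i, B₂ i ^ 2) / 2) :
    0 < θ * ρ₁ + (1 - θ) * ρ₂ ∧
    0 < (θ * E₁ + (1 - θ) * E₂)
        - (∑ i, (θ * m₁ i + (1 - θ) * m₂ i) ^ 2) / (2 * (θ * ρ₁ + (1 - θ) * ρ₂))
        - (∑ i, (θ * B₁ i + (1 - θ) * B₂ i) ^ 2) / 2 := by
  have h1θ : 0 ≤ 1 - θ := sub_nonneg.2 hθ1
  have hθ : θ + (1 - θ) = 1 := add_sub_cancel θ 1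
  refine ⟨convex_Ioi (0 : ℝ) hρ₁ hρ₂ hθ0 h1θ hθ, ?_⟩
  have hpos : 0 < θ * internalEnergy ρ₁ E₁ m₁ B₁ + (1 - θ) * internalEnergy ρ₂ E₂ m₂ B₂ :=
    convex_Ioi (0 : ℝ) hE₁ hE₂ hθ0 h1θ hθ
  exact hpos.trans_le (smul_add_smul_le_internalEnergy hθ0 h1θ hθ hρ₁ hρ₂ E₁ E₂ m₁ m₂ B₁ B₂)
end

section
/- For any admissible MHD state U = (ρ, m, B, E) with ρ > 0 and internal energy 𝓔(U) > 0, any real ξ, and any v*, B* ∈ ℝ³, the Godunov–Powell source vector S(U) = (0, B, v, v·B) satisfies −ξ(S(U)·n*) ≥ ξ(v*·B*) − (|ξ|/√ρ)(U·n* + |B*|²/2), where n* = (|v*|²/2, −v*, −B*, 1) and v = m/ρ. -/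
/-!
Writing `v = m/ρ`, the source term satisfies `S(U)·n* = (v - v*)·(B - B*) - v*·B*`, and completing
squares gives `U·n* + |B*|²/2 = (ρ|v - v*|² + |B - B*|²)/2 + 𝓔(U)`. Young's inequality applied to
`√ρ (v - v*)` and `B - B*` bounds `ξ (v - v*)·(B - B*)` by `|ξ|/√ρ` times the first summand, and
the second summand is positive.
-/

open Finset

section

variable {ι : Type*} (s : Finset ι)

theorem two_mul_abs_sum_mul_le (x y : ι → ℝ) :
    2 * |∑ i ∈ s, x i * y i| ≤ ∑ i ∈ s, x i ^ 2 + ∑ i ∈ s, y i ^ 2 := by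
  calc 2 * |∑ i ∈ s, x i * y i| ≤ ∑ i ∈ s, 2 * (|x i| * |y i|) := by
        rw [← mul_sum]
        gcongr
        simpa only [abs_mul] using abs_sum_le_sum_abs (fun i => x i * y i) s
    _ ≤ ∑ i ∈ s, (x i ^ 2 + y i ^ 2) := by
        gcongr with i
        simpa only [sq_abs, mul_assoc] using two_mul_le_add_sq |x i| |y i|
    _ = _ := sum_add_distrib

theorem mul_sum_mul_le_abs_div_sqrt_mul {ρ : ℝ} (hρ : 0 < ρ) (ξ : ℝ) (a b : ι → ℝ) :
    ξ * ∑ i ∈ s, a i * b i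
      ≤ |ξ| / √ρ * ((ρ * ∑ i ∈ s, a i ^ 2 + ∑ i ∈ s, b i ^ 2) / 2) := by
  have hsqrt : 0 < √ρ := Real.sqrt_pos.mpr hρ
  have hyoung : 2 * (√ρ * |∑ i ∈ s, a i * b i|) ≤ ρ * ∑ i ∈ s, a i ^ 2 + ∑ i ∈ s, b i ^ 2 := by
    simpa only [mul_pow, Real.sq_sqrt hρ.le, ← mul_sum, mul_assoc, abs_mul,
      abs_of_pos hsqrt] using two_mul_abs_sum_mul_le s (fun i => √ρ * a i) b
  calc ξ * ∑ i ∈ s, a i * b i ≤ |ξ| * |∑ i ∈ s, a i * b i| := by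
        rw [← abs_mul]; exact le_abs_self _
    _ ≤ |ξ| / √ρ * ((ρ * ∑ i ∈ s, a i ^ 2 + ∑ i ∈ s, b i ^ 2) / 2) := by
        rw [div_mul_eq_mul_div, le_div_iff₀ hsqrt, mul_assoc]
        gcongr
        linarith

theorem source_dot_gql_eq (ρ : ℝ) (m B vs Bs : ι → ℝ) :
    -(∑ i ∈ s, B i * vs i) - ∑ i ∈ s, m i / ρ * Bs i + ∑ i ∈ s, m i / ρ * B i
      = ∑ i ∈ s, (m i / ρ - vs i) * (B i - Bs i) - ∑ i ∈ s, vs i * Bs i := by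
  simp only [sub_mul, mul_sub, sum_sub_distrib, mul_comm (B _) (vs _)]
  ring

theorem state_dot_gql_add_half_sq_eq {ρ : ℝ} (hρ : ρ ≠ 0) (E : ℝ) (m B vs Bs : ι → ℝ) :
    ρ * ((∑ i ∈ s, vs i ^ 2) / 2) - ∑ i ∈ s, m i * vs i - ∑ i ∈ s, B i * Bs i + E
        + (∑ i ∈ s, Bs i ^ 2) / 2
      = (ρ * ∑ i ∈ s, (m i / ρ - vs i) ^ 2 + ∑ i ∈ s, (B i - Bs i) ^ 2) / 2
        + (E - (∑ i ∈ s, m i ^ 2) / (2 * ρ) - (∑ i ∈ s, B i ^ 2) / 2) := by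
  have hv : ρ * ∑ i ∈ s, (m i / ρ - vs i) ^ 2
      = (∑ i ∈ s, m i ^ 2) / ρ - 2 * ∑ i ∈ s, m i * vs i + ρ * ∑ i ∈ s, vs i ^ 2 := by
    simp only [mul_sum, sum_div, ← sum_sub_distrib, ← sum_add_distrib]
    exact sum_congr rfl fun i _ => by field_simp; ring
  have hB : ∑ i ∈ s, (B i - Bs i) ^ 2
      = ∑ i ∈ s, B i ^ 2 - 2 * ∑ i ∈ s, B i * Bs i + ∑ i ∈ s, Bs i ^ 2 := by
    simp only [sub_sq, sum_add_distrib, sum_sub_distrib, mul_sum, mul_assoc]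
  rw [hv, hB]
  field_simp
  ring

end

/-- Key inequality for the Godunov–Powell source term `S(U) = (0, B, v, v·B)`:
for any admissible state, real `ξ`, and `v*, B* ∈ ℝ³`,
`−ξ (S(U)·n*) ≥ ξ (v*·B*) − (|ξ|/√ρ)(U·n* + |B*|²/2)`. -/
theorem godunov_powell_source_inequality (ρ E ξ : ℝ) (m B vs Bs : Fin 3 → ℝ)
    (hρ : 0 < ρ)
    (hE : 0 < E - (∑ i, m i ^ 2) / (2 * ρ) - (∑ i, B i ^ 2) / 2) :
    -ξ * (-(∑ i, B i * vs i) - (∑ i, (m i / ρ) * Bs i) + (∑ i, (m i / ρ) * B i))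
      ≥ ξ * (∑ i, vs i * Bs i)
        - (|ξ| / Real.sqrt ρ) *
          ((ρ * ((∑ i, vs i ^ 2) / 2) - (∑ i, m i * vs i) - (∑ i, B i * Bs i) + E)
            + (∑ i, Bs i ^ 2) / 2) := by
  rw [source_dot_gql_eq, state_dot_gql_add_half_sq_eq _ hρ.ne', mul_add]
  have hcross := mul_sum_mul_le_abs_div_sqrt_mul univ hρ ξ (fun i => m i / ρ - vs i)
    (fun i => B i - Bs i)
  have henergy : 0 ≤ |ξ| / √ρ * (E - (∑ i, m i ^ 2) / (2 * ρ) - (∑ i, B i ^ 2) / 2) :=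
    mul_nonneg (by positivity) hE.le
  linarith
end

section
/- The DDF projection is exact: given arbitrary magnetic-field point values on the interfaces of a rectangular cell with mesh sizes Δx, Δy, the modified values B̃₁ = B₁ ∓ A₁ (on right/left edges respectively) and B̃₂ = B₂ ∓ A₂ (on top/bottom edges respectively), with A₁ = Δx·(∇·B)_{ij}/(2(1 + (Δx/Δy)²)) and A₂ = Δy·(∇·B)_{ij}/(2(1 + (Δy/Δx)²)), satisfy the discrete divergence-free condition: the Simpson-weighted discrete divergence of B̃ over the cell vanishes. -/
/-!
The Simpson weights sum to one, so shifting the three point values of an edge by `A` shifts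
its edge average by `A`. The projection therefore lowers the discrete divergence by
`2 A₁ / Δx + 2 A₂ / Δy = (∇·B) (1 / (1 + r²) + 1 / (1 + r⁻²))` with `r = Δx / Δy`,
and the two weights in parentheses sum to one.
-/

noncomputable section

def simpson (f : Fin 3 → ℝ) : ℝ := (f 0 + 4 * f 1 + f 2) / 6

theorem simpson_sub_const (f : Fin 3 → ℝ) (c : ℝ) :
    simpson (fun k => f k - c) = simpson f - c := by
  simp only [simpson]
  ring

theorem simpson_add_const (f : Fin 3 → ℝ) (c : ℝ) :
    simpson (fun k => f k + c) = simpson f + c := by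
  simp only [simpson]
  ring

theorem inv_one_add_sq_add_inv_one_add_inv_sq {K : Type*} [Field K] [LinearOrder K]
    [IsStrictOrderedRing K] {r : K} (hr : r ≠ 0) :
    (1 + r ^ 2)⁻¹ + (1 + r⁻¹ ^ 2)⁻¹ = 1 := by
  have h : 0 < 1 + r ^ 2 := by positivity
  field_simp
  ring

/-- Exactness of the DDF projection: subtracting `A₁` from the `B₁` values on the
right edge and adding `A₁` on the left edge (and analogously `A₂` for `B₂` on the
top/bottom edges), with
`A₁ = Δx (∇·B)ᵢⱼ / (2(1 + (Δx/Δy)²))` and `A₂ = Δy (∇·B)ᵢⱼ / (2(1 + (Δy/Δx)²))`,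
makes the Simpson-weighted discrete divergence vanish exactly. -/
theorem ddf_projection_exact (Δx Δy : ℝ) (hx : 0 < Δx) (hy : 0 < Δy)
    (B1R B1L B2T B2B : Fin 3 → ℝ) :
    let divB : ℝ := (simpson B1R - simpson B1L) / Δx + (simpson B2T - simpson B2B) / Δy
    let A1 : ℝ := Δx * divB / (2 * (1 + (Δx / Δy) ^ 2))
    let A2 : ℝ := Δy * divB / (2 * (1 + (Δy / Δx) ^ 2))
    (simpson (fun k => B1R k - A1) - simpson (fun k => B1L k + A1)) / Δx
      + (simpson (fun k => B2T k - A2) - simpson (fun k => B2B k + A2)) / Δy = 0 := by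
  intro divB A1 A2
  have hdiv : divB = (simpson B1R - simpson B1L) / Δx + (simpson B2T - simpson B2B) / Δy := rfl
  have hcorr : 2 * A1 / Δx + 2 * A2 / Δy = divB := by
    calc 2 * A1 / Δx + 2 * A2 / Δy
        = divB * ((1 + (Δx / Δy) ^ 2)⁻¹ + (1 + (Δx / Δy)⁻¹ ^ 2)⁻¹) := by
          simp only [A1, A2, inv_div]
          field_simp
      _ = divB := by
          rw [inv_one_add_sq_add_inv_one_add_inv_sq (div_ne_zero hx.ne' hy.ne'), mul_one]
  simp only [simpson_sub_const, simpson_add_const]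
  linear_combination hdiv - hcorr
end
end

section
/- If θ ∈ [0,1] and Ū and Ǔ both lie in the admissible set G = {ρ > 0, E − |m|²/(2ρ) − |B|²/2 > 0}, then the COE-modified state Û = θ(Ǔ − Ū) + Ū also lies in G; moreover, if a family of magnetic-field point values satisfies a linear discrete divergence-free constraint ∇_{ij}·B̌ = 0 and all values are modified by Û = θ(Ǔ − Ū) + Ū with the same θ and the same cell average, then the modified fields satisfy ∇_{ij}·B̂ = θ·∇_{ij}·B̌ + (1−θ)·∇_{ij}·B̄ where B̄ is a constant field, so ∇_{ij}·B̂ = 0. -/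
/-!
The admissible set is convex: the density constraint is linear, and the internal energy
`E - |m|² / (2ρ) - |B|² / 2` is concave on `ρ > 0` because `(m, ρ) ↦ m² / ρ` (the perspective
of `m ↦ m²`) and `B ↦ B²` are convex. Hence the internal energy of `θ Ǔ + (1 - θ) Ū` is at least
`θ` times that of `Ǔ` plus `1 - θ` times that of `Ū`, which is positive. The discrete divergence
is linear, so it maps `θ (B̌ - B̄) + B̄` to `θ (∇·B̌ - ∇·B̄) + ∇·B̄`, and `∇·B̄ = 0` for the constant
field `B̄`.
-/

open Finset

section Convexity

variable {θ : ℝ}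

lemma lerp_pos (hθ0 : 0 ≤ θ) (hθ1 : θ ≤ 1) {x y : ℝ} (hx : 0 < x) (hy : 0 < y) :
    0 < θ * (x - y) + y := by
  have h := convex_Ioi (0 : ℝ) hx hy hθ0 (sub_nonneg.2 hθ1) (add_sub_cancel θ 1)
  simp only [smul_eq_mul, Set.mem_Ioi] at h
  linarith

lemma sq_div_lerp_le (hθ0 : 0 ≤ θ) (hθ1 : θ ≤ 1) (a b : ℝ) {ρ₁ ρ₂ : ℝ}
    (hρ₁ : 0 < ρ₁) (hρ₂ : 0 < ρ₂) :
    (θ * (a - b) + b) ^ 2 / (θ * (ρ₁ - ρ₂) + ρ₂)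
      ≤ θ * (a ^ 2 / ρ₁) + (1 - θ) * (b ^ 2 / ρ₂) := by
  have hρ := lerp_pos hθ0 hθ1 hρ₁ hρ₂
  have hrhs : θ * (a ^ 2 / ρ₁) + (1 - θ) * (b ^ 2 / ρ₂)
      = (θ * a ^ 2 * ρ₂ + (1 - θ) * b ^ 2 * ρ₁) / (ρ₁ * ρ₂) := by
    field_simp
  rw [hrhs, div_le_div_iff₀ hρ (mul_pos hρ₁ hρ₂)]
  -- the difference of the two sides is `θ (1 - θ) (a ρ₂ - b ρ₁)²`
  nlinarith [mul_nonneg (mul_nonneg hθ0 (sub_nonneg.2 hθ1)) (sq_nonneg (a * ρ₂ - b * ρ₁))]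

lemma sum_sq_div_lerp_le {ι : Type*} [Fintype ι] (hθ0 : 0 ≤ θ) (hθ1 : θ ≤ 1) (a b : ι → ℝ)
    {ρ₁ ρ₂ : ℝ} (hρ₁ : 0 < ρ₁) (hρ₂ : 0 < ρ₂) :
    (∑ i, (θ * (a i - b i) + b i) ^ 2) / (θ * (ρ₁ - ρ₂) + ρ₂)
      ≤ θ * ((∑ i, a i ^ 2) / ρ₁) + (1 - θ) * ((∑ i, b i ^ 2) / ρ₂) := by
  simp only [sum_div, mul_sum, ← sum_add_distrib]
  exact sum_le_sum fun i _ ↦ sq_div_lerp_le hθ0 hθ1 (a i) (b i) hρ₁ hρ₂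

lemma sum_sq_lerp_le {ι : Type*} [Fintype ι] (hθ0 : 0 ≤ θ) (hθ1 : θ ≤ 1) (a b : ι → ℝ) :
    ∑ i, (θ * (a i - b i) + b i) ^ 2 ≤ θ * ∑ i, a i ^ 2 + (1 - θ) * ∑ i, b i ^ 2 := by
  simpa using sum_sq_div_lerp_le hθ0 hθ1 a b one_pos one_pos

end Convexity

/-- The admissible set is `{ρ > 0, mhdInternalEnergy ρ m B E > 0}`. -/
noncomputable def mhdInternalEnergy {ι : Type*} [Fintype ι] (ρ : ℝ) (m B : ι → ℝ) (E : ℝ) : ℝ :=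
  E - (∑ i, m i ^ 2) / (2 * ρ) - (∑ i, B i ^ 2) / 2

lemma mhdInternalEnergy_lerp_ge {ι : Type*} [Fintype ι] {θ : ℝ} (hθ0 : 0 ≤ θ) (hθ1 : θ ≤ 1)
    {ρ₁ ρ₂ : ℝ} (hρ₁ : 0 < ρ₁) (hρ₂ : 0 < ρ₂) (m₁ m₂ B₁ B₂ : ι → ℝ) (E₁ E₂ : ℝ) :
    θ * mhdInternalEnergy ρ₁ m₁ B₁ E₁ + (1 - θ) * mhdInternalEnergy ρ₂ m₂ B₂ E₂
      ≤ mhdInternalEnergy (θ * (ρ₁ - ρ₂) + ρ₂) (fun i ↦ θ * (m₁ i - m₂ i) + m₂ i)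
          (fun i ↦ θ * (B₁ i - B₂ i) + B₂ i) (θ * (E₁ - E₂) + E₂) := by
  have hm := sum_sq_div_lerp_le hθ0 hθ1 m₁ m₂ hρ₁ hρ₂
  have hB := sum_sq_lerp_le hθ0 hθ1 B₁ B₂
  simp only [mhdInternalEnergy, div_mul_eq_div_div_swap]
  linarith

lemma mhdInternalEnergy_lerp_pos {ι : Type*} [Fintype ι] {θ : ℝ} (hθ0 : 0 ≤ θ) (hθ1 : θ ≤ 1)
    {ρ₁ ρ₂ : ℝ} (hρ₁ : 0 < ρ₁) (hρ₂ : 0 < ρ₂) {m₁ m₂ B₁ B₂ : ι → ℝ} {E₁ E₂ : ℝ}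
    (h₁ : 0 < mhdInternalEnergy ρ₁ m₁ B₁ E₁) (h₂ : 0 < mhdInternalEnergy ρ₂ m₂ B₂ E₂) :
    0 < mhdInternalEnergy (θ * (ρ₁ - ρ₂) + ρ₂) (fun i ↦ θ * (m₁ i - m₂ i) + m₂ i)
          (fun i ↦ θ * (B₁ i - B₂ i) + B₂ i) (θ * (E₁ - E₂) + E₂) :=
  (lerp_pos hθ0 hθ1 h₁ h₂).trans_le <| by
    have := mhdInternalEnergy_lerp_ge hθ0 hθ1 hρ₁ hρ₂ m₁ m₂ B₁ B₂ E₁ E₂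
    linarith

lemma LinearMap.map_lerp_const_eq_zero {R N ι : Type*} [CommRing R] [AddCommGroup N]
    [Module R N] (D : (ι → R) →ₗ[R] N) {b : ι → R} (hb : D b = 0) {c : R}
    (hc : D (fun _ ↦ c) = 0) (θ : R) : D (fun k ↦ θ * (b k - c) + c) = 0 := by
  have h : (fun k ↦ θ * (b k - c) + c) = θ • (b - fun _ ↦ c) + fun _ ↦ c := rfl
  rw [h, map_add, map_smul, map_sub, hb, hc]
  simp

/-- The COE modification `Û = θ(Ǔ − Ū) + Ū`, `θ ∈ [0,1]`, preserves admissibility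
(by convexity of `G`); moreover, any linear discrete-divergence functional that
vanishes on constant fields also vanishes on the modified magnetic-field values. -/
theorem coe_preserves_admissibility_and_ddf (θ : ℝ) (hθ0 : 0 ≤ θ) (hθ1 : θ ≤ 1)
    (ρb Eb ρc Ec : ℝ) (mb Bb mc Bc : Fin 3 → ℝ)
    (hρb : 0 < ρb) (hEb : 0 < Eb - (∑ i, mb i ^ 2) / (2 * ρb) - (∑ i, Bb i ^ 2) / 2)
    (hρc : 0 < ρc) (hEc : 0 < Ec - (∑ i, mc i ^ 2) / (2 * ρc) - (∑ i, Bc i ^ 2) / 2)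
    (ι : Type*) (D : (ι → ℝ) →ₗ[ℝ] ℝ) (hDconst : ∀ c : ℝ, D (fun _ => c) = 0)
    (b : ι → ℝ) (c : ℝ) (hDb : D b = 0) :
    (0 < θ * (ρc - ρb) + ρb ∧
      0 < (θ * (Ec - Eb) + Eb)
          - (∑ i, (θ * (mc i - mb i) + mb i) ^ 2) / (2 * (θ * (ρc - ρb) + ρb))
          - (∑ i, (θ * (Bc i - Bb i) + Bb i) ^ 2) / 2) ∧
    D (fun k => θ * (b k - c) + c) = 0 :=
  ⟨⟨lerp_pos hθ0 hθ1 hρc hρb, mhdInternalEnergy_lerp_pos hθ0 hθ1 hρc hρb hEc hEb⟩,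
    D.map_lerp_const_eq_zero hDb (hDconst c) θ⟩
end
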